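/- (Proposition 1) Under assumptions (A1)–(A4) and the testing logic, the established test's negative predictive value NPV_y := P(x=0|y=0) satisfies NPV_y ∈ [ (1/σ)·(σ−γ)/(1−γ) , (1/σ)·(σ−τγ)/(1−τγ) ], and these bounds are sharp: each endpoint is attained by some distribution consistent with the data. -/

import Mathlib

/-!
Population model: a pmf `P` on `{0,1}^4` over `(x, y, z, t)` where `x = true` means truly
infected, `y` is the established test result, `z` the new test result, and `t = true` means
the person belongs to the testing pool.  The testing logic requires `z = 1 → t = 1`.
-/

namespace PaperTest

abbrev Dist := Bool → Bool → Bool → Bool → ℝ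

/-- Probability of the event `A` under `P`. -/
noncomputable def pr (P : Dist) (A : Bool → Bool → Bool → Bool → Bool) : ℝ :=
  ∑ x : Bool, ∑ y : Bool, ∑ z : Bool, ∑ t : Bool, if A x y z t then P x y z t else 0

/-- Conditional probability `P(A | B)`. -/
noncomputable def cpr (P : Dist) (A B : Bool → Bool → Bool → Bool → Bool) : ℝ :=
  pr P (fun x y z t => A x y z t && B x y z t) / pr P B

def IsPMF (P : Dist) : Prop :=
  (∀ x y z t, 0 ≤ P x y z t) ∧
    (∑ x : Bool, ∑ y : Bool, ∑ z : Bool, ∑ t : Bool, P x y z t) = 1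

/-- Testing logic: `z = 1` implies `t = 1`, i.e. there is no mass on `z = 1 ∧ t = 0`. -/
def TestLogic (P : Dist) : Prop := ∀ x y, P x y true false = 0

/-- Prevalence `p = P(x=1)`. -/
noncomputable def prev (P : Dist) : ℝ := pr P fun x _ _ _ => x

/-- Sensitivity of the established test, `σ = P(y=1 | x=1)`. -/
noncomputable def sens (P : Dist) : ℝ := cpr P (fun _ y _ _ => y) (fun x _ _ _ => x)

/-- `τ = P(t=1)`. -/
noncomputable def tau (P : Dist) : ℝ := pr P fun _ _ _ t => t

/-- `γ = P(y=1 | t=1)`. -/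
noncomputable def gamma (P : Dist) : ℝ := cpr P (fun _ y _ _ => y) (fun _ _ _ t => t)

/-- `ζ = P(z=1 | t=1)`. -/
noncomputable def zeta (P : Dist) : ℝ := cpr P (fun _ _ z _ => z) (fun _ _ _ t => t)

/-- `χ̄ = γ/σ`, the prevalence in the testing pool. -/
noncomputable def chibar (P : Dist) : ℝ := gamma P / sens P

/-- (A1) non-trivial prevalence. -/
def A1 (P : Dist) : Prop := 0 < prev P ∧ prev P < 1

/-- (A2) no false positives for the established test: `P(x=0, y=1) = 0`. -/
def A2 (P : Dist) : Prop := pr P (fun x y _ _ => !x && y) = 0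

/-- (A3) test monotonicity: `P(x=1 | t=1) ≥ P(x=1 | t=0)`. -/
def A3 (P : Dist) : Prop :=
  cpr P (fun x _ _ _ => x) (fun _ _ _ t => t) ≥ cpr P (fun x _ _ _ => x) (fun _ _ _ t => !t)

/-- (A4) health sufficiency: `P(y=1 | x=1, t=1) = P(y=1 | x=1) = σ`. -/
def A4 (P : Dist) : Prop := cpr P (fun _ y _ _ => y) (fun x _ _ t => x && t) = sens P

/-- `P(y=1, z=1 | t=1)`. -/
noncomputable def q11 (P : Dist) : ℝ := cpr P (fun _ y z _ => y && z) (fun _ _ _ t => t)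

/-- `P(y=1, z=0 | t=1)`. -/
noncomputable def q10 (P : Dist) : ℝ := cpr P (fun _ y z _ => y && !z) (fun _ _ _ t => t)

/-- `P(y=0, z=1 | t=1)`. -/
noncomputable def q01 (P : Dist) : ℝ := cpr P (fun _ y z _ => !y && z) (fun _ _ _ t => t)

/-- `P(y=0, z=0 | t=1)`. -/
noncomputable def q00 (P : Dist) : ℝ := cpr P (fun _ y z _ => !y && !z) (fun _ _ _ t => t)

/-- `Q` induces the same conditional data distribution `P(y, z | t=1)` and the same
sensitivity `σ` of the established test as `P`. -/
def SameData (P Q : Dist) : Prop :=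
  (∀ y0 z0 : Bool,
      cpr Q (fun _ y z _ => (y == y0) && (z == z0)) (fun _ _ _ t => t) =
        cpr P (fun _ y z _ => (y == y0) && (z == z0)) (fun _ _ _ t => t)) ∧
    sens Q = sens P

/-- Assumptions (A1)–(A4), the testing logic, and the maintained regularity conditions
`γ, ζ, τ > 0` and `γ < σ ≤ 1`. -/
def Setup (P : Dist) : Prop :=
  IsPMF P ∧ TestLogic P ∧ A1 P ∧ A2 P ∧ A3 P ∧ A4 P ∧
    0 < gamma P ∧ 0 < zeta P ∧ 0 < tau P ∧ gamma P < sens P ∧ sens P ≤ 1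

/-- `Q` is consistent with the data of `P`: it satisfies all assumptions and induces the
same `P(y, z | t=1)`, the same `σ`, and the same `τ`. -/
def Consistent (P Q : Dist) : Prop := Setup Q ∧ SameData P Q ∧ tau Q = tau P

/-- The established test's negative predictive value `NPV_y = P(x=0 | y=0)`. -/
noncomputable def npvY (P : Dist) : ℝ := cpr P (fun x _ _ _ => !x) (fun _ y _ _ => !y)

-- helpers
lemma pr_nonneg (P : Dist) (h : ∀ x y z t, 0 ≤ P x y z t) (A : Bool → Bool → Bool → Bool → Bool) :
    0 ≤ pr P A := by
  unfold pr
  refine Finset.sum_nonneg fun x _ => Finset.sum_nonneg fun y _ =>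
    Finset.sum_nonneg fun z _ => Finset.sum_nonneg fun t _ => ?_
  split
  · exact h x y z t
  · exact le_rfl

lemma div_le_of_le_mul' {a b c : ℝ} (hb : 0 ≤ b) (hc : 0 ≤ c) (h : a ≤ c * b) : a / b ≤ c := by
  rcases hb.eq_or_lt with h0 | h0
  · rw [← h0, div_zero]; exact hc
  · exact (div_le_iff₀ h0).mpr h


set_option maxHeartbeats 1000000 in
lemma core (Q : Dist) (hQ : Setup Q) :
    npvY Q = (1 - prev Q) / (1 - sens Q * prev Q) ∧
      tau Q * gamma Q / sens Q ≤ prev Q ∧ prev Q ≤ gamma Q / sens Q := by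
  obtain ⟨⟨hnn, hsum⟩, hTL, ⟨hp0, hp1⟩, hA2, hA3, hA4, hγ, hζ, hτ, hγσ, hσ1⟩ := hQ
  have hσ : 0 < sens Q := lt_trans hγ hγσ
  -- atom-level total mass
  have E1 : Q true true true true + Q true true true false + Q true true false true +
      Q true true false false + Q true false true true + Q true false true false +
      Q true false false true + Q true false false false + Q false true true true +
      Q false true true false + Q false true false true + Q false true false false +
      Q false false true true + Q false false true false + Q false false false true +
      Q false false false false = 1 := by
    have h2 := hsum
    simp only [Fintype.sum_bool] at h2
    linarith
  -- A2 atoms are zero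
  have EA2 : Q false true true true + Q false true true false + Q false true false true +
      Q false true false false = 0 := by
    have h2 := hA2
    unfold A2 at h2
    simp only [pr, Fintype.sum_bool] at h2
    simp at h2
    linarith
  have z1 : Q false true true true = 0 := by nlinarith [hnn false true true true, hnn false true true false, hnn false true false true, hnn false true false false]
  have z2 : Q false true true false = 0 := by nlinarith [hnn false true true true, hnn false true true false, hnn false true false true, hnn false true false false]
  have z3 : Q false true false true = 0 := by nlinarith [hnn false true true true, hnn false true true false, hnn false true false true, hnn false true false false]
  have z4 : Q false true false false = 0 := by nlinarith [hnn false true true true, hnn false true true false, hnn false true false true, hnn false true false false]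
  -- prev expansion
  have Ep : prev Q = Q true true true true + Q true true true false + Q true true false true +
      Q true true false false + Q true false true true + Q true false true false +
      Q true false false true + Q true false false false := by
    simp [prev, pr, Fintype.sum_bool]; ring
  -- sens: pr (y && x) = sens * prev
  have hxy : pr Q (fun x y _ _ => y && x) = sens Q * prev Q := by
    have : sens Q = pr Q (fun x y _ _ => y && x) / prev Q := rfl
    rw [this]; field_simp
  have Exy : pr Q (fun x y _ _ => y && x) = Q true true true true + Q true true true false +
      Q true true false true + Q true true false false := by
    simp [pr, Fintype.sum_bool]; ring
  -- tau expansion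
  have Eτ : tau Q = Q true true true true + Q true true false true + Q true false true true +
      Q true false false true + Q false true true true + Q false true false true +
      Q false false true true + Q false false false true := by
    simp [tau, pr, Fintype.sum_bool]; ring
  -- pr (y && t) = gamma * tau
  have hyt : pr Q (fun _ y _ t => y && t) = gamma Q * tau Q := by
    have h : gamma Q = pr Q (fun _ y _ t => y && t) / tau Q := rfl
    rw [h]; field_simp
  have Eyt : pr Q (fun _ y _ t => y && t) = Q true true true true + Q true true false true := by
    simp [pr, Fintype.sum_bool]
    linarith
  -- A4: numerator and denominator
  have Ed : pr Q (fun x _ _ t => x && t) = Q true true true true + Q true true false true +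
      Q true false true true + Q true false false true := by
    simp [pr, Fintype.sum_bool]; ring
  have En : pr Q (fun x y _ t => y && (x && t)) = Q true true true true + Q true true false true := by
    simp [pr, Fintype.sum_bool]
  have hA4' : pr Q (fun x y _ t => y && (x && t)) / pr Q (fun x _ _ t => x && t) = sens Q := by
    have h := hA4
    unfold A4 cpr at h
    exact h
  have hdne : pr Q (fun x _ _ t => x && t) ≠ 0 := by
    intro h0
    rw [h0, div_zero] at hA4'
    linarith
  have hnd : pr Q (fun x y _ t => y && (x && t)) = sens Q * pr Q (fun x _ _ t => x && t) := by
    field_simp at hA4'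
    linarith
  -- d = tau * gamma / sens
  have hd : pr Q (fun x _ _ t => x && t) = tau Q * gamma Q / sens Q := by
    have h1 : sens Q * pr Q (fun x _ _ t => x && t) = gamma Q * tau Q := by
      rw [← hnd, En, ← Eyt, hyt]
    field_simp
    linarith
  -- lower bound
  have hlow : tau Q * gamma Q / sens Q ≤ prev Q := by
    rw [← hd, Ed, Ep]
    linarith [hnn true true true false, hnn true true false false, hnn true false true false,
      hnn true false false false]
  -- upper bound
  have Em : pr Q (fun x _ _ t => x && !t) = Q true true true false + Q true true false false +
      Q true false true false + Q true false false false := by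
    simp [pr, Fintype.sum_bool]; ring
  have Eu : pr Q (fun _ _ _ t => !t) = 1 - tau Q := by
    simp only [pr, Fintype.sum_bool]
    simp
    linarith [E1, Eτ]
  have hu0 : (0:ℝ) ≤ pr Q (fun _ _ _ t => (!t : Bool)) := pr_nonneg Q hnn _
  have hdt : pr Q (fun x _ _ t => x && t) / tau Q = gamma Q / sens Q := by
    rw [hd]
    field_simp
    try ring
  have hA3' : pr Q (fun x _ _ t => x && !t) / pr Q (fun _ _ _ t => !t) ≤ gamma Q / sens Q := by
    have h := hA3
    unfold A3 cpr at h
    calc pr Q (fun x _ _ t => x && !t) / pr Q (fun _ _ _ t => !t)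
        = pr Q (fun x y z t => (fun x _ _ _ => x) x y z t && (fun _ _ _ t => !t) x y z t) /
            pr Q (fun _ _ _ t => !t) := rfl
      _ ≤ pr Q (fun x y z t => (fun x _ _ _ => x) x y z t && (fun _ _ _ t => t) x y z t) /
            pr Q (fun _ _ _ t => t) := h
      _ = gamma Q / sens Q := hdt
  have hm : pr Q (fun x _ _ t => x && !t) ≤ gamma Q / sens Q * pr Q (fun _ _ _ t => !t) := by
    rcases hu0.eq_or_lt with h0 | h0
    · have hmu : pr Q (fun x _ _ t => x && !t) ≤ pr Q (fun _ _ _ t => (!t : Bool)) := by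
        rw [Em]
        simp only [pr, Fintype.sum_bool]
        simp
        linarith [hnn false true true false, hnn false true false false,
          hnn false false true false, hnn false false false false]
      have : pr Q (fun x _ _ t => x && !t) = 0 :=
        le_antisymm (by rw [← h0] at hmu; exact hmu) (pr_nonneg Q hnn _)
      rw [this, ← h0, mul_zero]
    · exact (div_le_iff₀ h0).mp hA3'
  have hup : prev Q ≤ gamma Q / sens Q := by
    have h1 : prev Q = pr Q (fun x _ _ t => x && t) + pr Q (fun x _ _ t => x && !t) := by
      rw [Ep, Ed, Em]; ring
    rw [Eu] at hm
    rw [h1, hd]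
    ring_nf at hm ⊢
    linarith [hm]
  -- npv formula
  have hnum : pr Q (fun x y _ _ => !x && !y) = 1 - prev Q := by
    rw [Ep]
    simp only [pr, Fintype.sum_bool]
    simp
    linarith
  have hden : pr Q (fun _ y _ _ => !y) = 1 - sens Q * prev Q := by
    rw [← hxy, Exy]
    simp only [pr, Fintype.sum_bool]
    simp
    linarith
  refine ⟨?_, hlow, hup⟩
  unfold npvY cpr
  rw [show (fun x y z t => (fun x _ _ _ => !x) x y z t && (fun _ y _ _ => !y) x y z t) =
    (fun x y _ _ => !x && !y) from rfl, hnum, hden]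


lemma tau_le_one (R : Dist) (hR : IsPMF R) : tau R ≤ 1 := by
  obtain ⟨hnn, hsum⟩ := hR
  simp only [Fintype.sum_bool] at hsum
  simp only [tau, pr, Fintype.sum_bool]
  simp
  linarith [hnn true true true false, hnn true true false false, hnn true false true false,
    hnn true false false false, hnn false true true false, hnn false true false false,
    hnn false false true false, hnn false false false false]

lemma gamma_split (R : Dist) : gamma R =
    cpr R (fun _ y z _ => (y == true) && (z == true)) (fun _ _ _ t => t) +
      cpr R (fun _ y z _ => (y == true) && (z == false)) (fun _ _ _ t => t) := by
  unfold gamma cpr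
  rw [← add_div]
  congr 1
  simp [pr, Fintype.sum_bool]
  try ring

lemma bounds_ineq {σ γ τ p : ℝ} (hγ : 0 < γ) (hγσ : γ < σ) (hσ1 : σ ≤ 1) (hτ : 0 < τ)
    (hτ1 : τ ≤ 1) (hlo : τ * γ / σ ≤ p) (hup : p ≤ γ / σ) :
    (1 / σ) * ((σ - γ) / (1 - γ)) ≤ (1 - p) / (1 - σ * p) ∧
      (1 - p) / (1 - σ * p) ≤ (1 / σ) * ((σ - τ * γ) / (1 - τ * γ)) := by
  have hσ : 0 < σ := lt_trans hγ hγσ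
  have hσp : σ * p ≤ γ := by
    have := (le_div_iff₀ hσ).mp hup
    linarith
  have hσp2 : τ * γ ≤ σ * p := by
    have := (div_le_iff₀ hσ).mp hlo
    linarith
  have h1γ : 0 < 1 - γ := by linarith
  have hτγ : τ * γ < 1 := by nlinarith
  have hσp1 : σ * p < 1 := by linarith
  constructor
  · have e : (1 / σ) * ((σ - γ) / (1 - γ)) = (σ - γ) / (σ * (1 - γ)) := by
      field_simp
    rw [e, div_le_div_iff₀ (mul_pos hσ (by linarith)) (by linarith)]
    nlinarith [mul_nonneg (sub_nonneg.2 hσ1) (sub_nonneg.2 hσp)]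
  · have e : (1 / σ) * ((σ - τ * γ) / (1 - τ * γ)) = (σ - τ * γ) / (σ * (1 - τ * γ)) := by
      field_simp
    rw [e, div_le_div_iff₀ (by linarith) (mul_pos hσ (by linarith))]
    nlinarith [mul_nonneg (sub_nonneg.2 hσ1) (sub_nonneg.2 hσp2)]



noncomputable def alpha (P : Dist) : ℝ := gamma P * (1 - sens P) / (sens P * (1 - gamma P))

noncomputable def mkQ (P : Dist) (c : ℝ) : Dist := fun x y z t =>
  if t then
    pr P (fun _ y' z' t' => (y' == y) && (z' == z) && t') *
      (if y then (if x then 1 else 0) else if x then alpha P else 1 - alpha P)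
  else if z then 0
  else
    (1 - tau P) *
      (if y then (if x then c * gamma P else 0)
       else if x then c * (1 - gamma P) * alpha P
       else c * (1 - gamma P) * (1 - alpha P) + (1 - c))

lemma alpha_facts (P : Dist) (h : Setup P) :
    0 ≤ alpha P ∧ alpha P ≤ 1 ∧
      gamma P + (1 - gamma P) * alpha P = gamma P / sens P := by
  obtain ⟨-, -, -, -, -, -, hγ, hζ, hτ, hγσ, hσ1⟩ := h
  have hσ : 0 < sens P := lt_trans hγ hγσ
  have h1γ : 0 < 1 - gamma P := by linarith
  refine ⟨?_, ?_, ?_⟩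
  · unfold alpha
    apply div_nonneg (by nlinarith) (by nlinarith)
  · unfold alpha
    rw [div_le_one (by nlinarith)]
    nlinarith
  · unfold alpha
    field_simp
    try ring

lemma P_facts (P : Dist) (h : Setup P) :
    tau P = P true true true true + P true true false true + P true false true true +
        P true false false true + P false true true true + P false true false true +
        P false false true true + P false false false true ∧
      gamma P * tau P = P true true true true + P true true false true +
        P false true true true + P false true false true ∧
      zeta P * tau P = P true true true true + P true false true true +
        P false true true true + P false false true true := by
  obtain ⟨-, -, -, -, -, -, hγ, hζ, hτ, hγσ, hσ1⟩ := h
  refine ⟨?_, ?_, ?_⟩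
  · simp [tau, pr, Fintype.sum_bool]; ring
  · have h1 : gamma P = pr P (fun _ y _ t => y && t) / tau P := rfl
    have h2 : pr P (fun _ y _ t => y && t) = P true true true true + P true true false true +
        P false true true true + P false true false true := by
      simp [pr, Fintype.sum_bool]
      try ring
    rw [h1, div_mul_cancel₀ _ (ne_of_gt hτ), h2]
  · have h1 : zeta P = pr P (fun _ _ z t => z && t) / tau P := rfl
    have h2 : pr P (fun _ _ z t => z && t) = P true true true true + P true false true true +
        P false true true true + P false false true true := by
      simp [pr, Fintype.sum_bool]
      try ring
    rw [h1, div_mul_cancel₀ _ (ne_of_gt hτ), h2]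

set_option maxHeartbeats 2000000 in
lemma mk_pr_facts1 (P : Dist) (h : Setup P) (c : ℝ) :
    pr (mkQ P c) (fun _ _ _ t => t) = tau P ∧
      pr (mkQ P c) (fun _ _ _ t => !t) = 1 - tau P ∧
      pr (mkQ P c) (fun _ y _ t => y && t) = gamma P * tau P ∧
      pr (mkQ P c) (fun _ _ z t => z && t) = zeta P * tau P ∧
      pr (mkQ P c) (fun x y _ t => y && (x && t)) = gamma P * tau P := by
  obtain ⟨hPt, hPyt, hPzt⟩ := P_facts P h
  refine ⟨?_, ?_, ?_, ?_, ?_⟩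
  · simp [mkQ, pr, Fintype.sum_bool]
    first | linear_combination hPt | linear_combination -hPt
  · simp [mkQ, pr, Fintype.sum_bool]
    ring
  · simp [mkQ, pr, Fintype.sum_bool]
    first | linear_combination hPyt | linear_combination -hPyt
  · simp [mkQ, pr, Fintype.sum_bool]
    first | linear_combination hPzt | linear_combination -hPzt
  · simp [mkQ, pr, Fintype.sum_bool]
    first | linear_combination hPyt | linear_combination -hPyt

set_option maxHeartbeats 2000000 in
lemma mk_pr_facts2 (P : Dist) (h : Setup P) (c : ℝ) :
    pr (mkQ P c) (fun x _ _ t => x && t) = tau P * (gamma P / sens P) ∧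
      pr (mkQ P c) (fun x _ _ t => x && !t) = c * (1 - tau P) * (gamma P / sens P) ∧
      prev (mkQ P c) = (tau P + c * (1 - tau P)) * (gamma P / sens P) ∧
      pr (mkQ P c) (fun x y _ _ => y && x) = (tau P + c * (1 - tau P)) * gamma P := by
  obtain ⟨hPt, hPyt, hPzt⟩ := P_facts P h
  obtain ⟨hα0, hα1, hαid⟩ := alpha_facts P h
  refine ⟨?_, ?_, ?_, ?_⟩
  · rw [show tau P * (gamma P / sens P) =
        tau P * (gamma P + (1 - gamma P) * alpha P) from by rw [hαid]]
    simp [mkQ, pr, Fintype.sum_bool]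
    first
      | linear_combination (alpha P - 1) * hPyt - alpha P * hPt
      | linear_combination (1 - alpha P) * hPyt + alpha P * hPt
  · rw [show c * (1 - tau P) * (gamma P / sens P) =
        c * (1 - tau P) * (gamma P + (1 - gamma P) * alpha P) from by rw [hαid]]
    simp [mkQ, pr, Fintype.sum_bool]
    ring
  · rw [show (tau P + c * (1 - tau P)) * (gamma P / sens P) =
        (tau P + c * (1 - tau P)) * (gamma P + (1 - gamma P) * alpha P) from by rw [hαid]]
    simp [mkQ, prev, pr, Fintype.sum_bool]
    first
      | linear_combination (alpha P - 1) * hPyt - alpha P * hPt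
      | linear_combination (1 - alpha P) * hPyt + alpha P * hPt
  · simp [mkQ, pr, Fintype.sum_bool]
    first | linear_combination hPyt | linear_combination -hPyt

set_option maxHeartbeats 2000000 in
lemma mk_pr_facts3 (P : Dist) (c : ℝ) : ∀ y0 z0 : Bool,
    pr (mkQ P c) (fun x y z t => ((y == y0) && (z == z0)) && t) =
      pr P (fun x y z t => ((y == y0) && (z == z0)) && t) := by
  intro y0 z0
  rcases y0 <;> rcases z0 <;>
    (simp [mkQ, pr, Fintype.sum_bool]; try ring)

set_option maxHeartbeats 2000000 in
lemma mk_pmf (P : Dist) (h : Setup P) (c : ℝ) (hc0 : 0 ≤ c) (hc1 : c ≤ 1) :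
    IsPMF (mkQ P c) := by
  have hfacts1 := mk_pr_facts1 P h c
  obtain ⟨hα0, hα1, hαid⟩ := alpha_facts P h
  obtain ⟨⟨hnn, hsum⟩, -, -, -, -, -, hγ, hζ, hτ, hγσ, hσ1⟩ := h
  have hσ : 0 < sens P := lt_trans hγ hγσ
  have h1γ : 0 < 1 - gamma P := by linarith
  have hτ1 : tau P ≤ 1 := tau_le_one P ⟨hnn, hsum⟩
  have hτ0 : 0 ≤ 1 - tau P := by linarith
  have h1α : 0 ≤ 1 - alpha P := by linarith
  have hpr : ∀ A, 0 ≤ pr P A := pr_nonneg P hnn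
  have hβ1 : 0 ≤ c * gamma P := mul_nonneg hc0 hγ.le
  have hβ2 : 0 ≤ c * (1 - gamma P) * alpha P :=
    mul_nonneg (mul_nonneg hc0 h1γ.le) hα0
  have hβ3 : 0 ≤ c * (1 - gamma P) * (1 - alpha P) + (1 - c) :=
    add_nonneg (mul_nonneg (mul_nonneg hc0 h1γ.le) h1α) (by linarith)
  constructor
  · intro x y z t
    rcases x <;> rcases y <;> rcases z <;> rcases t <;> simp [mkQ] <;>
      first
        | exact hpr _
        | exact mul_nonneg (hpr _) hα0
        | exact mul_nonneg (hpr _) h1α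
        | exact mul_nonneg hτ0 hβ1
        | exact mul_nonneg hτ0 hβ2
        | exact mul_nonneg hτ0 hβ3
        | positivity
  · have e : pr (mkQ P c) (fun _ _ _ t => t) + pr (mkQ P c) (fun _ _ _ t => !t) =
        ∑ x : Bool, ∑ y : Bool, ∑ z : Bool, ∑ t : Bool, mkQ P c x y z t := by
      simp [pr, Fintype.sum_bool]
      ring
    rw [← e, hfacts1.1, hfacts1.2.1]
    ring

set_option maxHeartbeats 2000000 in
lemma mk_setup (P : Dist) (h : Setup P) (c : ℝ) (hc0 : 0 ≤ c) (hc1 : c ≤ 1) :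
    Consistent P (mkQ P c) ∧
      prev (mkQ P c) = (tau P + c * (1 - tau P)) * (gamma P / sens P) := by
  have hpmf : IsPMF (mkQ P c) := mk_pmf P h c hc0 hc1
  obtain ⟨EQt, EQnt, EQyt, EQzt, EQyxt⟩ := mk_pr_facts1 P h c
  obtain ⟨EQxt, EQxnt, EQprev, EQxy⟩ := mk_pr_facts2 P h c
  have EQsd := mk_pr_facts3 P c
  obtain ⟨hα0, hα1, hαid⟩ := alpha_facts P h
  have hτ1 : tau P ≤ 1 := tau_le_one P h.1
  obtain ⟨⟨hnn, hsum⟩, hTL, ⟨hp0, hp1⟩, hA2, hA3, hA4, hγ, hζ, hτ, hγσ, hσ1⟩ := h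
  have hσ : 0 < sens P := lt_trans hγ hγσ
  have h1γ : 0 < 1 - gamma P := by linarith
  have hτ0 : 0 ≤ 1 - tau P := by linarith
  have hpos : 0 < tau P + c * (1 - tau P) := by nlinarith
  have hw : 0 < gamma P / sens P := div_pos hγ hσ
  set Q := mkQ P c with hQdef
  set s := sens P with hs
  set g := gamma P with hg
  set tP := tau P with htP
  set zP := zeta P with hzP
  -- sens Q = s
  have hsensQ : sens Q = s := by
    unfold sens cpr
    have e1 : pr Q (fun x y z t => (fun _ y _ _ => y) x y z t && (fun x _ _ _ => x) x y z t) =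
        (tP + c * (1 - tP)) * g := EQxy
    have e2 : pr Q (fun x _ _ _ => x) = (tP + c * (1 - tP)) * (g / s) := EQprev
    rw [e1, e2]
    have hden : (tP + c * (1 - tP)) * (g / s) ≠ 0 := ne_of_gt (mul_pos hpos hw)
    rw [div_eq_iff hden]
    field_simp
    try ring
  have htauQ : tau Q = tP := EQt
  have hgammaQ : gamma Q = g := by
    unfold gamma cpr
    have e1 : pr Q (fun x y z t => (fun _ y _ _ => y) x y z t && (fun _ _ _ t => t) x y z t) =
        g * tP := EQyt
    rw [e1, EQt, mul_div_assoc, div_self (ne_of_gt hτ), mul_one]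
  have hzetaQ : zeta Q = zP := by
    unfold zeta cpr
    have e1 : pr Q (fun x y z t => (fun _ _ z _ => z) x y z t && (fun _ _ _ t => t) x y z t) =
        zP * tP := EQzt
    rw [e1, EQt, mul_div_assoc, div_self (ne_of_gt hτ), mul_one]
  have hQTL : TestLogic Q := by
    intro x y
    simp [hQdef, mkQ]
  have hQA1 : A1 Q := by
    constructor
    · rw [EQprev]
      exact mul_pos hpos hw
    · rw [EQprev]
      have h1 : g / s < 1 := (div_lt_one hσ).mpr hγσ
      nlinarith
  have hQA2 : A2 Q := by
    unfold A2
    simp [hQdef, mkQ, pr, Fintype.sum_bool]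
  have hQA3 : A3 Q := by
    unfold A3 cpr
    have e1 : pr Q (fun x y z t => (fun x _ _ _ => x) x y z t && (fun _ _ _ t => t) x y z t) =
        tP * (g / s) := EQxt
    have e2 : pr Q (fun x y z t => (fun x _ _ _ => x) x y z t && (fun _ _ _ t => !t) x y z t) =
        c * (1 - tP) * (g / s) := EQxnt
    rw [e1, e2, EQt, EQnt, mul_div_cancel_left₀ _ (ne_of_gt hτ)]
    apply div_le_of_le_mul' (by linarith) hw.le
    nlinarith [mul_nonneg (mul_nonneg (sub_nonneg.2 hc1) hτ0) hw.le]
  have hQA4 : A4 Q := by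
    unfold A4 cpr
    have e1 : pr Q (fun x y z t => (fun _ y _ _ => y) x y z t && (fun x _ _ t => x && t) x y z t) =
        g * tP := EQyxt
    have e2 : pr Q (fun x _ _ t => x && t) = tP * (g / s) := EQxt
    rw [e1, e2, hsensQ]
    rw [div_eq_iff (by positivity)]
    field_simp
    try ring
  have hSD : SameData P Q := by
    constructor
    · intro y0 z0
      unfold cpr
      have ept : pr P (fun _ _ _ t => t) = tP := rfl
      have e1 : pr Q (fun x y z t =>
          (fun _ y z _ => (y == y0) && (z == z0)) x y z t && (fun _ _ _ t => t) x y z t) =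
          pr P (fun x y z t => ((y == y0) && (z == z0)) && t) := EQsd y0 z0
      have e2 : pr P (fun x y z t =>
          (fun _ y z _ => (y == y0) && (z == z0)) x y z t && (fun _ _ _ t => t) x y z t) =
          pr P (fun x y z t => ((y == y0) && (z == z0)) && t) := rfl
      rw [e1, e2, EQt, ept]
    · exact hsensQ
  exact ⟨⟨⟨hpmf, hQTL, hQA1, hQA2, hQA3, hQA4,
    by rw [hgammaQ]; exact hγ, by rw [hzetaQ]; exact hζ, by rw [htauQ]; exact hτ,
    by rw [hgammaQ, hsensQ]; exact hγσ, by rw [hsensQ]; exact hσ1⟩, hSD, htauQ⟩, EQprev⟩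

/-- Proposition 1: under (A1)–(A4) and the testing logic, the established
test's negative predictive value satisfies
`NPV_y ∈ [(1/σ)(σ−γ)/(1−γ), (1/σ)(σ−τγ)/(1−τγ)]`, and these bounds are sharp: each
endpoint is attained by some distribution consistent with the data. -/
theorem statement1 (P : Dist) (h : Setup P) :
    (∀ Q : Dist, Consistent P Q →
      npvY Q ∈ Set.Icc ((1 / sens P) * ((sens P - gamma P) / (1 - gamma P)))
        ((1 / sens P) * ((sens P - tau P * gamma P) / (1 - tau P * gamma P)))) ∧
    (∃ Q : Dist, Consistent P Q ∧
      npvY Q = (1 / sens P) * ((sens P - gamma P) / (1 - gamma P))) ∧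
    (∃ Q : Dist, Consistent P Q ∧
      npvY Q = (1 / sens P) * ((sens P - tau P * gamma P) / (1 - tau P * gamma P))) := by
  obtain ⟨hPpmf, hPTL, hPA1, hPA2, hPA3, hPA4, hPγ, hPζ, hPτ, hPγσ, hPσ1⟩ := h
  have hPσ : 0 < sens P := lt_trans hPγ hPγσ
  have hPτ1 : tau P ≤ 1 := tau_le_one P hPpmf
  refine ⟨?_, ?_, ?_⟩
  · rintro Q ⟨hQs, hS, hτeq⟩
    have hγeq : gamma Q = gamma P := by
      rw [gamma_split Q, hS.1 true true, hS.1 true false, ← gamma_split P]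
    have hσeq : sens Q = sens P := hS.2
    obtain ⟨hnpv, hlo, hup⟩ := core Q hQs
    rw [hγeq, hσeq, hτeq] at hlo
    rw [hγeq, hσeq] at hup
    rw [Set.mem_Icc, hnpv, hσeq]
    exact ⟨(bounds_ineq hPγ hPγσ hPσ1 hPτ hPτ1 hlo hup).1,
           (bounds_ineq hPγ hPγσ hPσ1 hPτ hPτ1 hlo hup).2⟩
  · -- lower endpoint: c = 1
    obtain ⟨hcons, hprev⟩ := mk_setup P ⟨hPpmf, hPTL, hPA1, hPA2, hPA3, hPA4, hPγ, hPζ, hPτ, hPγσ, hPσ1⟩ 1 zero_le_one le_rfl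
    refine ⟨mkQ P 1, hcons, ?_⟩
    obtain ⟨hnpv, _, _⟩ := core _ hcons.1
    have hs : sens (mkQ P 1) = sens P := hcons.2.1.2
    rw [hnpv, hs, hprev]
    have h1γ : (0:ℝ) < 1 - gamma P := by linarith
    rw [show (tau P + 1 * (1 - tau P)) * (gamma P / sens P) = gamma P / sens P by ring]
    rw [show sens P * (gamma P / sens P) = gamma P by field_simp]
    field_simp
    try ring
  · -- upper endpoint: c = 0
    obtain ⟨hcons, hprev⟩ := mk_setup P ⟨hPpmf, hPTL, hPA1, hPA2, hPA3, hPA4, hPγ, hPζ, hPτ, hPγσ, hPσ1⟩ 0 le_rfl zero_le_one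
    refine ⟨mkQ P 0, hcons, ?_⟩
    obtain ⟨hnpv, _, _⟩ := core _ hcons.1
    have hs : sens (mkQ P 0) = sens P := hcons.2.1.2
    rw [hnpv, hs, hprev]
    have hτγ : tau P * gamma P < 1 := by nlinarith
    rw [show (tau P + 0 * (1 - tau P)) * (gamma P / sens P) = tau P * gamma P / sens P by ring]
    rw [show sens P * (tau P * gamma P / sens P) = tau P * gamma P by field_simp]
    field_simp
    try ring

end PaperTest
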